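/- arXiv:math/0610304 — 2 statements merged into one kernel-verified Lean document; each statement's English description precedes it below -/
import Mathlib

section
/- Let G = (V,E) be a connected locally finite graph, let A and B be disjoint subsets of V with A ∪ B reachable (a simple random walk from any vertex outside A ∪ B hits A ∪ B in finitely many steps a.s.), and let x ∈ V \ (A ∪ B) be connected to A by a path avoiding B. Then there is a unique nonnegative bounded function h on V such that h ≡ 0 on A ∪ B, the discrete Laplacian Δ_G h(v) = Σ_{w∼v}(h(w) − h(v)) vanishes at every v ∈ V \ (A ∪ B ∪ {x}), and Σ_{v∈A} Δ_G h(v) = 1. -/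
open MeasureTheory

/-- The discrete Laplacian `Δ_G f (v) = Σ_{w ∼ v} (f w − f v)` on a locally finite graph. -/
def discLap {V : Type*} (G : SimpleGraph V) [∀ v : V, Fintype (G.neighborSet v)]
    (f : V → ℝ) (v : V) : ℝ :=
  ∑ w ∈ G.neighborFinset v, (f w - f v)

open scoped Classical in
/-- `X` is a simple random walk on `G` started from `x`, under the probability
measure `μ`: the probability of following any given finite path equals the product
of the reciprocals of the degrees along the path (and is `0` for non-paths). -/
def IsSRW {V : Type*} (G : SimpleGraph V) [∀ v : V, Fintype (G.neighborSet v)]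
    {Ω : Type*} [MeasurableSpace Ω] (μ : Measure Ω) (X : ℕ → Ω → V) (x : V) : Prop :=
  ∀ (k : ℕ) (p : ℕ → V), p 0 = x →
    μ {ω | ∀ i ≤ k, X i ω = p i} =
      if ∀ i < k, G.Adj (p i) (p (i + 1))
      then ∏ i ∈ Finset.range k, ((G.degree (p i) : ENNReal))⁻¹
      else 0

/-- A set `S` of vertices is reachable: simple random walk started from any vertex
outside `S` hits `S` in finitely many steps almost surely. -/
def ReachableSet {V : Type*} (G : SimpleGraph V) [∀ v : V, Fintype (G.neighborSet v)]
    (S : Set V) : Prop :=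
  ∀ x ∉ S, ∀ {Ω : Type} [MeasurableSpace Ω] (μ : Measure Ω) (X : ℕ → Ω → V),
    IsProbabilityMeasure μ → IsSRW G μ X x → μ {ω | ∃ n : ℕ, X n ω ∈ S} = 1

/-!
Let `hitProb v` be the probability that simple random walk from `v` visits `x` before `A ∪ B`,
the increasing limit of the probabilities `hitProbWithin n v` of doing so within `n` steps. It is
harmonic off `A ∪ B ∪ {x}`. Each `hitProbWithin n` is finitely supported, so its Laplacian sums
to zero, and it is subharmonic away from `x`; hence its Laplacian mass on `A` is at most `deg x`.
In the limit `Z = Σ_{a ∈ A} Δ hitProb (a)` is finite, and it is positive because `hitProb`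
propagates positivity along the path from `x` to `A` avoiding `B`. So `hitProb / Z` exists.

For uniqueness, a bounded function vanishing on a set `S` and harmonic off `S` is at most `M`
times the probability of surviving `n` steps outside `S`. Reachability of `S` forces these
probabilities to zero: test it on the explicit walk on `[0,1)` with Lebesgue measure whose
steps are read off the digits of `t` in the bases `deg`. Applied to `h - h x • hitProb` with
`S = A ∪ B ∪ {x}`, this shows every solution is a multiple of `hitProb`.
-/

open MeasureTheory Filter Topology Finset

section Laplacian

variable {V : Type*} (G : SimpleGraph V) [∀ v : V, Fintype (G.neighborSet v)]

namespace SimpleGraph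

noncomputable def neighborAvg (f : V → ℝ) (v : V) : ℝ :=
  (∑ w ∈ G.neighborFinset v, f w) / G.degree v

variable {G}

lemma neighborAvg_nonneg {f : V → ℝ} (hf : ∀ w, 0 ≤ f w) (v : V) : 0 ≤ G.neighborAvg f v :=
  div_nonneg (sum_nonneg fun w _ => hf w) (Nat.cast_nonneg _)

lemma neighborAvg_le {f : V → ℝ} {c : ℝ} (hc : 0 ≤ c) (hf : ∀ w, f w ≤ c) (v : V) :
    G.neighborAvg f v ≤ c := by
  refine div_le_of_le_mul₀ (Nat.cast_nonneg _) hc ?_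
  calc ∑ w ∈ G.neighborFinset v, f w ≤ ∑ _w ∈ G.neighborFinset v, c := sum_le_sum fun w _ => hf w
    _ = c * G.degree v := by rw [sum_const, card_neighborFinset_eq_degree, nsmul_eq_mul, mul_comm]

lemma neighborAvg_mono {f g : V → ℝ} (hfg : ∀ w, f w ≤ g w) (v : V) :
    G.neighborAvg f v ≤ G.neighborAvg g v :=
  div_le_div_of_nonneg_right (sum_le_sum fun w _ => hfg w) (Nat.cast_nonneg _)

lemma abs_neighborAvg_le (f : V → ℝ) (v : V) :
    |G.neighborAvg f v| ≤ G.neighborAvg (fun w => |f w|) v := by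
  rw [neighborAvg, neighborAvg, abs_div, Nat.abs_cast]
  exact div_le_div_of_nonneg_right (abs_sum_le_sum_abs _ _) (Nat.cast_nonneg _)

lemma neighborAvg_const_mul (c : ℝ) (f : V → ℝ) (v : V) :
    G.neighborAvg (fun w => c * f w) v = c * G.neighborAvg f v := by
  rw [neighborAvg, neighborAvg, ← mul_sum, mul_div_assoc]

lemma tendsto_neighborAvg {ι : Type*} {l : Filter ι} {F : ι → V → ℝ} {f : V → ℝ}
    (hF : ∀ w, Tendsto (fun i => F i w) l (𝓝 (f w))) (v : V) :
    Tendsto (fun i => G.neighborAvg (F i) v) l (𝓝 (G.neighborAvg f v)) :=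
  (tendsto_finsetSum _ fun w _ => hF w).div_const _

lemma degree_mul_neighborAvg (f : V → ℝ) (v : V) :
    G.degree v * G.neighborAvg f v = ∑ w ∈ G.neighborFinset v, f w := by
  rcases eq_or_ne (G.degree v) 0 with hd | hd
  · rw [neighborAvg, hd, Nat.cast_zero, zero_mul,
      card_eq_zero.1 ((G.card_neighborFinset_eq_degree v).trans hd), sum_empty]
  · exact mul_div_cancel₀ _ (Nat.cast_ne_zero.2 hd)

end SimpleGraph

variable {G}

lemma discLap_eq_degree_mul (f : V → ℝ) (v : V) :
    discLap G f v = G.degree v * (G.neighborAvg f v - f v) := by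
  rw [discLap, sum_sub_distrib, sum_const, G.card_neighborFinset_eq_degree, nsmul_eq_mul, mul_sub,
    G.degree_mul_neighborAvg]

lemma eq_neighborAvg_of_discLap_eq_zero {f : V → ℝ} {v : V} (hv : 0 < G.degree v)
    (h : discLap G f v = 0) : f v = G.neighborAvg f v := by
  rw [discLap_eq_degree_mul] at h
  have := (mul_eq_zero.1 h).resolve_left (by positivity)
  linarith

lemma discLap_sub (f g : V → ℝ) (v : V) :
    discLap G (f - g) v = discLap G f v - discLap G g v := by
  simp only [discLap, ← sum_sub_distrib, Pi.sub_apply]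
  exact sum_congr rfl fun w _ => by ring

lemma discLap_const_mul (c : ℝ) (f : V → ℝ) (v : V) :
    discLap G (fun w => c * f w) v = c * discLap G f v := by
  simp only [discLap, mul_sum, mul_sub]

lemma tendsto_discLap {ι : Type*} {l : Filter ι} {F : ι → V → ℝ} {f : V → ℝ}
    (hF : ∀ w, Tendsto (fun i => F i w) l (𝓝 (f w))) (v : V) :
    Tendsto (fun i => discLap G (F i) v) l (𝓝 (discLap G f v)) :=
  tendsto_finsetSum _ fun w _ => (hF w).sub (hF v)

lemma sum_discLap_eq_zero (f : V → ℝ) (U : Finset V)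
    (hU : ∀ v, f v ≠ 0 → v ∈ U ∧ G.neighborFinset v ⊆ U) :
    ∑ v ∈ U, discLap G f v = 0 := by
  classical
  have hrestrict : ∀ v ∈ U, discLap G f v = ∑ w ∈ U, if G.Adj v w then f w - f v else 0 := by
    intro v _
    rw [← sum_filter, discLap]
    refine (sum_subset (fun w hw => ?_) fun w hwN hwU => ?_).symm
    · simp_all
    · have hwU' : w ∉ U := fun h => hwU (mem_filter.2 ⟨h, (G.mem_neighborFinset v w).1 hwN⟩)
      have hfw : f w = 0 := by_contra fun h => hwU' (hU w h).1
      have hfv : f v = 0 := by_contra fun h => hwU' ((hU v h).2 hwN)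
      rw [hfw, hfv, sub_self]
  rw [sum_congr rfl hrestrict]
  set L := ∑ v ∈ U, ∑ w ∈ U, if G.Adj v w then f w - f v else 0
  have hanti : L = -L := by
    calc L = ∑ w ∈ U, ∑ v ∈ U, (if G.Adj v w then f w - f v else 0) := sum_comm
      _ = -L := by
        simp only [L, ← sum_neg_distrib]
        refine sum_congr rfl fun w _ => sum_congr rfl fun v _ => ?_
        rw [G.adj_comm]
        split_ifs <;> ring
  linarith

end Laplacian

lemma Nat.floor_eq_of_sub_mem_Ico {a : ℝ} {j : ℕ} (h : a - j ∈ Set.Ico (0 : ℝ) 1) : ⌊a⌋₊ = j :=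
  (Nat.floor_eq_iff (by linarith [h.1, j.cast_nonneg (α := ℝ)])).2
    ⟨by linarith [h.1], by linarith [h.2]⟩

lemma Real.volume_preimage_mul_sub {d : ℕ} (hd : 0 < d) (b : ℝ) (E : Set ℝ) :
    volume ((fun t : ℝ => t * d - b) ⁻¹' E) = volume E / d := by
  have hpre : (fun t : ℝ => t * d - b) ⁻¹' E = (· * (d : ℝ)) ⁻¹' ((· + -b) ⁻¹' E) := by
    ext t; simp [sub_eq_add_neg]
  rw [hpre, Real.volume_preimage_mul_right (by positivity), measure_preimage_add_right,
    abs_of_pos (by positivity), ENNReal.ofReal_inv_of_pos (by positivity), ENNReal.ofReal_natCast,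
    ENNReal.div_eq_inv_mul]

lemma ReachableSet.mono {V : Type*} {G : SimpleGraph V} [∀ v : V, Fintype (G.neighborSet v)]
    {S T : Set V} (hS : ReachableSet G S) (hST : S ⊆ T) : ReachableSet G T := by
  intro x hx Ω _ μ X hμ hX
  refine le_antisymm prob_le_one ?_
  rw [← hS x (fun h => hx (hST h)) μ X hμ hX]
  exact measure_mono fun ω ⟨n, hn⟩ => ⟨n, hST hn⟩

namespace SimpleGraph

section HitProb

variable {V : Type*} (G : SimpleGraph V) [∀ v : V, Fintype (G.neighborSet v)]

open scoped Classical in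
/-- The probability that simple random walk from `v` visits `x` within `n` steps, before `S`. -/
noncomputable def hitProbWithin (S : Set V) (x : V) : ℕ → V → ℝ
  | 0, v => if v = x then 1 else 0
  | n + 1, v => if v = x then 1 else if v ∈ S then 0 else G.neighborAvg (hitProbWithin S x n) v

noncomputable def hitProb (S : Set V) (x v : V) : ℝ :=
  ⨆ n, G.hitProbWithin S x n v

open scoped Classical in
noncomputable def ballFinset (x : V) : ℕ → Finset V
  | 0 => {x}
  | n + 1 => ballFinset x n ∪ (ballFinset x n).biUnion fun v => G.neighborFinset v

variable {G} {S : Set V} {x : V}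

lemma hitProbWithin_self (n : ℕ) : G.hitProbWithin S x n x = 1 := by
  cases n <;> simp [hitProbWithin]

lemma hitProbWithin_of_mem {v : V} (hv : v ∈ S) (hvx : v ≠ x) (n : ℕ) :
    G.hitProbWithin S x n v = 0 := by
  cases n <;> simp [hitProbWithin, hv, hvx]

lemma hitProbWithin_succ_of_notMem {v : V} (hv : v ∉ S) (hvx : v ≠ x) (n : ℕ) :
    G.hitProbWithin S x (n + 1) v = G.neighborAvg (G.hitProbWithin S x n) v := by
  simp [hitProbWithin, hv, hvx]

lemma hitProbWithin_nonneg (n : ℕ) (v : V) : 0 ≤ G.hitProbWithin S x n v := by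
  induction n generalizing v with
  | zero => unfold hitProbWithin; split_ifs <;> norm_num
  | succ n ih =>
    unfold hitProbWithin
    split_ifs
    exacts [zero_le_one, le_rfl, neighborAvg_nonneg ih v]

lemma hitProbWithin_le_one (n : ℕ) (v : V) : G.hitProbWithin S x n v ≤ 1 := by
  induction n generalizing v with
  | zero => unfold hitProbWithin; split_ifs <;> norm_num
  | succ n ih =>
    unfold hitProbWithin
    split_ifs
    exacts [le_rfl, zero_le_one, neighborAvg_le zero_le_one ih v]

lemma hitProbWithin_le_succ (n : ℕ) (v : V) :
    G.hitProbWithin S x n v ≤ G.hitProbWithin S x (n + 1) v := by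
  induction n generalizing v with
  | zero =>
    by_cases hvx : v = x
    · simp [hitProbWithin, hvx]
    · rw [hitProbWithin, if_neg hvx]
      exact hitProbWithin_nonneg _ _
  | succ n ih =>
    by_cases hvx : v = x
    · rw [hvx, hitProbWithin_self, hitProbWithin_self]
    by_cases hv : v ∈ S
    · rw [hitProbWithin_of_mem hv hvx, hitProbWithin_of_mem hv hvx]
    rw [hitProbWithin_succ_of_notMem hv hvx, hitProbWithin_succ_of_notMem hv hvx]
    exact neighborAvg_mono ih v

lemma tendsto_hitProbWithin (v : V) :
    Tendsto (fun n => G.hitProbWithin S x n v) atTop (𝓝 (G.hitProb S x v)) :=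
  tendsto_atTop_ciSup (monotone_nat_of_le_succ fun n => hitProbWithin_le_succ n v)
    ⟨1, Set.forall_mem_range.2 fun n => hitProbWithin_le_one n v⟩

lemma hitProb_nonneg (v : V) : 0 ≤ G.hitProb S x v :=
  ge_of_tendsto' (tendsto_hitProbWithin v) fun n => hitProbWithin_nonneg n v

lemma hitProb_le_one (v : V) : G.hitProb S x v ≤ 1 :=
  le_of_tendsto' (tendsto_hitProbWithin v) fun n => hitProbWithin_le_one n v

lemma hitProb_self : G.hitProb S x x = 1 := by
  simp [hitProb, hitProbWithin_self]

lemma hitProb_of_mem {v : V} (hv : v ∈ S) (hvx : v ≠ x) : G.hitProb S x v = 0 := by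
  simp [hitProb, hitProbWithin_of_mem hv hvx]

lemma hitProb_eq_neighborAvg {v : V} (hv : v ∉ S) (hvx : v ≠ x) :
    G.hitProb S x v = G.neighborAvg (G.hitProb S x) v := by
  refine tendsto_nhds_unique ((tendsto_add_atTop_iff_nat 1).2 (tendsto_hitProbWithin v)) ?_
  simp only [hitProbWithin_succ_of_notMem hv hvx]
  exact tendsto_neighborAvg tendsto_hitProbWithin v

lemma discLap_hitProb_of_notMem {v : V} (hv : v ∉ S) (hvx : v ≠ x) :
    discLap G (G.hitProb S x) v = 0 := by
  rw [discLap_eq_degree_mul, ← hitProb_eq_neighborAvg hv hvx, sub_self, mul_zero]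

lemma discLap_hitProbWithin_nonneg {v : V} (hvx : v ≠ x) (n : ℕ) :
    0 ≤ discLap G (G.hitProbWithin S x n) v := by
  by_cases hv : v ∈ S
  · rw [discLap_eq_degree_mul, hitProbWithin_of_mem hv hvx, sub_zero]
    exact mul_nonneg (Nat.cast_nonneg _) (neighborAvg_nonneg (hitProbWithin_nonneg n) v)
  · rw [discLap_eq_degree_mul, ← hitProbWithin_succ_of_notMem hv hvx]
    exact mul_nonneg (Nat.cast_nonneg _) (sub_nonneg.2 (hitProbWithin_le_succ n v))

lemma discLap_hitProb_nonneg {v : V} (hvx : v ≠ x) : 0 ≤ discLap G (G.hitProb S x) v :=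
  ge_of_tendsto' (tendsto_discLap tendsto_hitProbWithin v) (discLap_hitProbWithin_nonneg hvx)

lemma self_mem_ballFinset (n : ℕ) : x ∈ G.ballFinset x n := by
  classical
  induction n with
  | zero => simp [ballFinset]
  | succ n ih => exact mem_union_left _ ih

lemma ballFinset_subset_succ (n : ℕ) : G.ballFinset x n ⊆ G.ballFinset x (n + 1) := by
  classical
  exact subset_union_left

lemma neighborFinset_subset_ballFinset_succ {v : V} {n : ℕ} (hv : v ∈ G.ballFinset x n) :
    G.neighborFinset v ⊆ G.ballFinset x (n + 1) := by
  classical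
  exact fun _ hw => mem_union_right _ (mem_biUnion.2 ⟨v, hv, hw⟩)

lemma mem_ballFinset_of_hitProbWithin_ne_zero {n : ℕ} {v : V}
    (h : G.hitProbWithin S x n v ≠ 0) : v ∈ G.ballFinset x n := by
  induction n generalizing v with
  | zero =>
    by_cases hvx : v = x
    · exact hvx ▸ self_mem_ballFinset 0
    · simp [hitProbWithin, hvx] at h
  | succ n ih =>
    by_cases hvx : v = x
    · exact hvx ▸ self_mem_ballFinset _
    by_cases hv : v ∈ S
    · exact absurd (hitProbWithin_of_mem hv hvx _) h
    rw [hitProbWithin_succ_of_notMem hv hvx, neighborAvg] at h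
    obtain ⟨w, hw, hw0⟩ := exists_ne_zero_of_sum_ne_zero (left_ne_zero_of_mul h)
    refine neighborFinset_subset_ballFinset_succ (ih hw0) ?_
    simpa [adj_comm] using hw

lemma sum_discLap_hitProbWithin_le {T : Finset V} (hT : x ∉ T) (n : ℕ) :
    ∑ a ∈ T, discLap G (G.hitProbWithin S x n) a ≤ G.degree x := by
  classical
  set f := G.hitProbWithin S x n
  set U := G.ballFinset x (n + 1) ∪ T
  have hU : ∀ v, f v ≠ 0 → v ∈ U ∧ G.neighborFinset v ⊆ U := fun v hv =>
    have hball := mem_ballFinset_of_hitProbWithin_ne_zero hv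
    ⟨mem_union_left _ (ballFinset_subset_succ n hball),
      (neighborFinset_subset_ballFinset_succ hball).trans subset_union_left⟩
  have hxU : x ∈ U := mem_union_left _ (self_mem_ballFinset _)
  have hTU : T ⊆ U.erase x := fun a ha =>
    mem_erase.2 ⟨ne_of_mem_of_not_mem ha hT, mem_union_right _ ha⟩
  have hx : -(G.degree x : ℝ) ≤ discLap G f x := by
    have hfx : f x = 1 := hitProbWithin_self n
    have havg : 0 ≤ G.degree x * G.neighborAvg f x :=
      mul_nonneg (Nat.cast_nonneg _) (neighborAvg_nonneg (hitProbWithin_nonneg n) x)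
    rw [discLap_eq_degree_mul, hfx, mul_sub, mul_one]
    linarith
  have hsum := sum_erase_add U (discLap G f) hxU
  rw [sum_discLap_eq_zero f U hU] at hsum
  calc ∑ a ∈ T, discLap G f a ≤ ∑ a ∈ U.erase x, discLap G f a :=
        sum_le_sum_of_subset_of_nonneg hTU fun a ha _ =>
          discLap_hitProbWithin_nonneg (ne_of_mem_erase ha) n
    _ ≤ G.degree x := by linarith

lemma sum_discLap_hitProb_le {T : Finset V} (hT : x ∉ T) :
    ∑ a ∈ T, discLap G (G.hitProb S x) a ≤ G.degree x :=
  le_of_tendsto' (tendsto_finsetSum _ fun a _ => tendsto_discLap tendsto_hitProbWithin a)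
    (sum_discLap_hitProbWithin_le hT)

lemma summable_discLap_hitProb {s : Set V} (hs : x ∉ s) :
    Summable fun a : s => discLap G (G.hitProb S x) a := by
  refine summable_of_sum_le (c := G.degree x)
    (fun a => discLap_hitProb_nonneg (ne_of_mem_of_not_mem a.2 hs)) fun u => ?_
  simpa [sum_map] using
    sum_discLap_hitProb_le (S := S) (T := u.map (.subtype _)) fun hx =>
      have ⟨b, _, hb⟩ := Finset.mem_map.1 hx
      hs (hb ▸ b.2)

lemma hitProb_pos_of_adj {v w : V} (hw : w ∉ S) (hadj : G.Adj w v) (hv : 0 < G.hitProb S x v) :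
    0 < G.hitProb S x w := by
  by_cases hwx : w = x
  · rw [hwx, hitProb_self]
    exact zero_lt_one
  rw [hitProb_eq_neighborAvg hw hwx, neighborAvg]
  refine div_pos (hv.trans_le (single_le_sum (fun u _ => hitProb_nonneg u) ?_))
    (Nat.cast_pos.2 hadj.degree_pos_left)
  simpa using hadj

lemma exists_discLap_hitProb_pos {A B : Set V} {a : V} (W : G.Walk x a) (ha : a ∈ A)
    (hWB : ∀ v ∈ W.support, v ∉ B) (hxA : x ∉ A) :
    ∃ a ∈ A, 0 < discLap G (G.hitProb (A ∪ B) x) a := by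
  obtain ⟨d, hd, ⟨-, hfst⟩, hsnd⟩ :=
    W.exists_boundary_dart {v | v ∉ A ∧ 0 < G.hitProb (A ∪ B) x v}
      ⟨hxA, hitProb_self.trans_gt zero_lt_one⟩ fun h => h.1 ha
  have hsndA : d.snd ∈ A := by
    by_contra hsndA
    have hsndB := hWB _ (W.dart_snd_mem_support_of_mem_darts hd)
    exact hsnd ⟨hsndA, hitProb_pos_of_adj (by simp [hsndA, hsndB]) d.adj.symm hfst⟩
  refine ⟨d.snd, hsndA, ?_⟩
  have hsndx : d.snd ≠ x := ne_of_mem_of_not_mem hsndA hxA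
  simp only [discLap, hitProb_of_mem (S := A ∪ B) (Or.inl hsndA) hsndx, sub_zero]
  exact hfst.trans_le (single_le_sum (fun u _ => hitProb_nonneg u) (by simpa using d.adj.symm))

lemma tsum_discLap_hitProb_pos {A B : Set V} {a : V} (W : G.Walk x a) (ha : a ∈ A)
    (hWB : ∀ v ∈ W.support, v ∉ B) (hxA : x ∉ A) :
    0 < ∑' a : A, discLap G (G.hitProb (A ∪ B) x) a := by
  obtain ⟨a', ha', hpos⟩ := exists_discLap_hitProb_pos W ha hWB hxA
  exact (summable_discLap_hitProb hxA).tsum_pos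
    (fun a => discLap_hitProb_nonneg (ne_of_mem_of_not_mem a.2 hxA)) ⟨a', ha'⟩ hpos

end HitProb

section Survival

variable {V : Type*} (G : SimpleGraph V) [∀ v : V, Fintype (G.neighborSet v)]

open scoped Classical in
/-- The probability that simple random walk from `v` avoids `S` during its first `n` steps. -/
noncomputable def survivalProb (S : Set V) : ℕ → V → ℝ
  | 0, v => if v ∈ S then 0 else 1
  | n + 1, v => if v ∈ S then 0 else G.neighborAvg (survivalProb S n) v

variable {G} {S : Set V}

lemma survivalProb_of_mem {v : V} (hv : v ∈ S) (n : ℕ) : G.survivalProb S n v = 0 := by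
  cases n <;> simp [survivalProb, hv]

lemma survivalProb_succ_of_notMem {v : V} (hv : v ∉ S) (n : ℕ) :
    G.survivalProb S (n + 1) v = G.neighborAvg (G.survivalProb S n) v := by
  simp [survivalProb, hv]

lemma survivalProb_nonneg (n : ℕ) (v : V) : 0 ≤ G.survivalProb S n v := by
  induction n generalizing v with
  | zero => unfold survivalProb; split_ifs <;> norm_num
  | succ n ih =>
    unfold survivalProb
    split_ifs
    exacts [le_rfl, neighborAvg_nonneg ih v]

lemma abs_le_mul_survivalProb (hdeg : ∀ v, 0 < G.degree v) {u : V → ℝ} {M : ℝ}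
    (hM : ∀ v, |u v| ≤ M) (hS : ∀ v ∈ S, u v = 0) (hharm : ∀ v ∉ S, discLap G u v = 0)
    (n : ℕ) (v : V) : |u v| ≤ M * G.survivalProb S n v := by
  by_cases hv : v ∈ S
  · rw [hS v hv, survivalProb_of_mem hv, abs_zero, mul_zero]
  induction n generalizing v with
  | zero => simpa [survivalProb, hv] using hM v
  | succ n ih =>
    have hih : ∀ w, |u w| ≤ M * G.survivalProb S n w := fun w => by
      by_cases hw : w ∈ S
      · rw [hS w hw, survivalProb_of_mem hw, abs_zero, mul_zero]
      · exact ih w hw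
    rw [eq_neighborAvg_of_discLap_eq_zero (hdeg v) (hharm v hv),
      survivalProb_succ_of_notMem hv, ← neighborAvg_const_mul]
    exact (abs_neighborAvg_le u v).trans (neighborAvg_mono hih v)

end Survival

section Walk

open scoped ENNReal

variable {V : Type*} (G : SimpleGraph V) [∀ v : V, Fintype (G.neighborSet v)]

noncomputable def neighborEnum (v : V) (j : ℕ) : V :=
  if h : j < (G.neighborFinset v).card then (G.neighborFinset v).equivFin.symm ⟨j, h⟩ else v

/-- One step of simple random walk driven by `t ∈ [0,1)`: the integer part of `t · deg v`
chooses the neighbour, the fractional part drives the remaining steps. -/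
noncomputable def walkStep (p : V × ℝ) : V × ℝ :=
  (G.neighborEnum p.1 ⌊p.2 * G.degree p.1⌋₊, p.2 * G.degree p.1 - ⌊p.2 * G.degree p.1⌋₊)

noncomputable def walkTraj (v : V) (n : ℕ) (t : ℝ) : V :=
  (G.walkStep^[n] (v, t)).1

def trajEvent (A : ℕ → Set V) (v : V) (n : ℕ) : Set ℝ :=
  {t | t ∈ Set.Ico 0 1 ∧ ∀ i ≤ n, G.walkTraj v i t ∈ A i}

open scoped Classical in
/-- The probability that simple random walk from `v` lies in `A i` at every time `i ≤ n`. -/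
noncomputable def trajProb (A : ℕ → Set V) : ℕ → V → ℝ≥0∞
  | 0, v => if v ∈ A 0 then 1 else 0
  | n + 1, v => if v ∈ A 0 then
      (∑ w ∈ G.neighborFinset v, trajProb (fun i => A (i + 1)) n w) / G.degree v else 0

variable {G}

lemma sum_range_degree_neighborEnum {M : Type*} [AddCommMonoid M] (v : V) (f : V → M) :
    ∑ j ∈ range (G.degree v), f (G.neighborEnum v j) = ∑ w ∈ G.neighborFinset v, f w := by
  rw [← Fin.sum_univ_eq_sum_range, ← sum_coe_sort (G.neighborFinset v)]
  refine Fintype.sum_equiv ((G.neighborFinset v).equivFin.symm) _ _ fun j => ?_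
  rw [neighborEnum, dif_pos j.isLt]

lemma walkStep_of_sub_mem_Ico {v : V} {t : ℝ} {j : ℕ} (h : t * G.degree v - j ∈ Set.Ico (0 : ℝ) 1) :
    G.walkStep (v, t) = (G.neighborEnum v j, t * G.degree v - j) := by
  simp only [walkStep, Nat.floor_eq_of_sub_mem_Ico h]

lemma walkTraj_zero (v : V) (t : ℝ) : G.walkTraj v 0 t = v := rfl

lemma walkTraj_succ (v : V) (n : ℕ) (t : ℝ) :
    G.walkTraj v (n + 1) t = G.walkTraj (G.walkStep (v, t)).1 n (G.walkStep (v, t)).2 := by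
  rw [walkTraj, Function.iterate_succ_apply]
  rfl

lemma trajEvent_eq_empty {A : ℕ → Set V} {v : V} (hv : v ∉ A 0) (n : ℕ) :
    G.trajEvent A v n = ∅ :=
  Set.eq_empty_of_forall_notMem fun _ ht => hv (ht.2 0 n.zero_le)

lemma trajEvent_zero_of_mem {A : ℕ → Set V} {v : V} (hv : v ∈ A 0) :
    G.trajEvent A v 0 = Set.Ico 0 1 := by
  ext t
  simp [trajEvent, walkTraj_zero, hv]

lemma trajEvent_succ {A : ℕ → Set V} {v : V} (hd : 0 < G.degree v) (hv : v ∈ A 0) (n : ℕ) :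
    G.trajEvent A v (n + 1) = ⋃ j ∈ range (G.degree v), (fun t : ℝ => t * G.degree v - j) ⁻¹'
      G.trajEvent (fun i => A (i + 1)) (G.neighborEnum v j) n := by
  have hd' : (0 : ℝ) < G.degree v := Nat.cast_pos.2 hd
  ext t
  simp only [Set.mem_iUnion, Set.mem_preimage, mem_range, exists_prop]
  constructor
  · rintro ⟨ht, hA⟩
    have htd : 0 ≤ t * G.degree v := mul_nonneg ht.1 hd'.le
    have hfrac : t * G.degree v - ⌊t * G.degree v⌋₊ ∈ Set.Ico (0 : ℝ) 1 :=
      ⟨sub_nonneg.2 (Nat.floor_le htd), by linarith [Nat.lt_floor_add_one (t * G.degree v)]⟩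
    refine ⟨⌊t * G.degree v⌋₊, (Nat.floor_lt htd).2 (by nlinarith [ht.2]), hfrac, fun i hi => ?_⟩
    have := hA (i + 1) (by omega)
    rwa [walkTraj_succ, walkStep_of_sub_mem_Ico hfrac] at this
  · rintro ⟨j, hj, hfrac, hA⟩
    have hjd : (j : ℝ) + 1 ≤ G.degree v := by exact_mod_cast hj
    have hj0 : (0 : ℝ) ≤ j := j.cast_nonneg
    refine ⟨⟨by nlinarith [hfrac.1], by nlinarith [hfrac.2]⟩, fun i hi => ?_⟩
    rcases i with _ | i
    · exact hv
    · rw [walkTraj_succ, walkStep_of_sub_mem_Ico hfrac]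
      exact hA i (by omega)

lemma measurableSet_trajEvent (hdeg : ∀ v, 0 < G.degree v) (A : ℕ → Set V) (v : V) (n : ℕ) :
    MeasurableSet (G.trajEvent A v n) := by
  induction n generalizing A v with
  | zero =>
    by_cases hv : v ∈ A 0
    · rw [trajEvent_zero_of_mem hv]
      exact measurableSet_Ico
    · rw [trajEvent_eq_empty hv]
      exact MeasurableSet.empty
  | succ n ih =>
    by_cases hv : v ∈ A 0
    · rw [trajEvent_succ (hdeg v) hv]
      exact Finset.measurableSet_biUnion _ fun j _ =>
        ((measurable_id.mul_const _).sub_const _) (ih _ _)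
    · rw [trajEvent_eq_empty hv]
      exact MeasurableSet.empty

lemma volume_trajEvent (hdeg : ∀ v, 0 < G.degree v) (A : ℕ → Set V) (v : V) (n : ℕ) :
    volume (G.trajEvent A v n) = G.trajProb A n v := by
  induction n generalizing A v with
  | zero =>
    by_cases hv : v ∈ A 0
    · simp [trajEvent_zero_of_mem hv, trajProb, hv]
    · simp [trajEvent_eq_empty hv, trajProb, hv]
  | succ n ih =>
    by_cases hv : v ∈ A 0
    · have hdisj : (range (G.degree v) : Set ℕ).PairwiseDisjoint fun j =>
          (fun t : ℝ => t * G.degree v - j) ⁻¹'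
            G.trajEvent (fun i => A (i + 1)) (G.neighborEnum v j) n :=
        fun j _ j' _ hne => Set.disjoint_left.2 fun t h h' =>
          hne ((Nat.floor_eq_of_sub_mem_Ico h.1).symm.trans (Nat.floor_eq_of_sub_mem_Ico h'.1))
      rw [trajEvent_succ (hdeg v) hv, measure_biUnion_finset hdisj
          fun j _ => ((measurable_id.mul_const _).sub_const _) (measurableSet_trajEvent hdeg _ _ _),
        trajProb, if_pos hv, ← sum_range_degree_neighborEnum, ENNReal.div_eq_inv_mul, mul_sum]
      exact sum_congr rfl fun j _ => by
        rw [Real.volume_preimage_mul_sub (hdeg v), ih, ENNReal.div_eq_inv_mul]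
    · simp [trajEvent_eq_empty hv, trajProb, hv]

open scoped Classical in
lemma trajProb_singleton (p : ℕ → V) (k : ℕ) (v : V) :
    G.trajProb (fun i => {p i}) k v =
      if v = p 0 ∧ ∀ i < k, G.Adj (p i) (p (i + 1))
      then ∏ i ∈ range k, ((G.degree (p i) : ℝ≥0∞))⁻¹ else 0 := by
  induction k generalizing p v with
  | zero => simp [trajProb]
  | succ k ih =>
    by_cases hv : v = p 0
    · subst hv
      simp only [trajProb, Set.mem_singleton_iff, if_true, ih, ite_and, sum_ite_eq',
        mem_neighborFinset, Nat.forall_lt_succ_left, prod_range_succ']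
      split_ifs <;> simp [ENNReal.div_eq_inv_mul, mul_comm]
    · simp [trajProb, hv]

lemma trajProb_const_compl (hdeg : ∀ v, 0 < G.degree v) (S : Set V) (n : ℕ) (v : V) :
    G.trajProb (fun _ => Sᶜ) n v = ENNReal.ofReal (G.survivalProb S n v) := by
  induction n generalizing v with
  | zero => by_cases hv : v ∈ S <;> simp [trajProb, survivalProb, hv]
  | succ n ih =>
    by_cases hv : v ∈ S
    · simp [trajProb, survivalProb, hv]
    · rw [survivalProb_succ_of_notMem hv, neighborAvg,
        ENNReal.ofReal_div_of_pos (Nat.cast_pos.2 (hdeg v)),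
        ENNReal.ofReal_sum_of_nonneg fun w _ => survivalProb_nonneg n w, ENNReal.ofReal_natCast]
      simp [trajProb, hv, ih]

end Walk

section Reachable

variable {V : Type*} {G : SimpleGraph V} [∀ v : V, Fintype (G.neighborSet v)] {S : Set V}

lemma isSRW_walkTraj (hdeg : ∀ v, 0 < G.degree v) (v : V) :
    IsSRW G (volume.restrict (Set.Ico 0 1)) (G.walkTraj v) v := by
  intro k p hp0
  have hevent : {t | ∀ i ≤ k, G.walkTraj v i t = p i} ∩ Set.Ico 0 1 =
      G.trajEvent (fun i => {p i}) v k := by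
    ext t
    simp [trajEvent, and_comm]
  rw [Measure.restrict_apply' measurableSet_Ico, hevent, volume_trajEvent hdeg,
    trajProb_singleton]
  by_cases hadj : ∀ i < k, G.Adj (p i) (p (i + 1))
  · rw [if_pos ⟨hp0.symm, hadj⟩, if_pos hadj]
  · rw [if_neg fun h => hadj h.2, if_neg hadj]

lemma tendsto_survivalProb (hdeg : ∀ v, 0 < G.degree v) (hS : ReachableSet G S) {v : V}
    (hv : v ∉ S) : Tendsto (fun n => G.survivalProb S n v) atTop (𝓝 0) := by
  set μ := volume.restrict (Set.Ico (0 : ℝ) 1)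
  have : IsProbabilityMeasure μ := ⟨by simp [μ]⟩
  set C := fun n => G.trajEvent (fun _ => Sᶜ) v n
  have hCmeas : ∀ n, MeasurableSet (C n) := measurableSet_trajEvent hdeg _ v
  have hC : ∀ n, μ (C n) = ENNReal.ofReal (G.survivalProb S n v) := fun n => by
    rw [Measure.restrict_apply (hCmeas n), Set.inter_eq_left.2 fun t ht => ht.1,
      volume_trajEvent hdeg, trajProb_const_compl hdeg]
  have hnull : μ (⋂ n, C n) = 0 := by
    refine (prob_compl_eq_one_iff (.iInter hCmeas)).1 (le_antisymm prob_le_one ?_)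
    rw [← hS v hv μ (G.walkTraj v) this (isSRW_walkTraj hdeg v)]
    exact measure_mono fun t ⟨n, hn⟩ ht => (Set.mem_iInter.1 ht n).2 n le_rfl hn
  have hlim := tendsto_measure_iInter_atTop (fun n => (hCmeas n).nullMeasurableSet)
    (fun m n hmn t ht => ⟨ht.1, fun i hi => ht.2 i (hi.trans hmn)⟩) ⟨0, measure_ne_top μ _⟩
  rw [hnull] at hlim
  simpa [Function.comp_def, hC, ENNReal.toReal_ofReal (survivalProb_nonneg _ v)] using
    (ENNReal.tendsto_toReal ENNReal.zero_ne_top).comp hlim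

lemma eq_zero_of_bounded_of_discLap_eq_zero (hdeg : ∀ v, 0 < G.degree v) (hS : ReachableSet G S)
    {u : V → ℝ} (hbdd : ∃ M, ∀ v, |u v| ≤ M) (hzero : ∀ v ∈ S, u v = 0)
    (hharm : ∀ v ∉ S, discLap G u v = 0) : u = 0 := by
  obtain ⟨M, hM⟩ := hbdd
  funext v
  by_cases hv : v ∈ S
  · exact hzero v hv
  have hlim := (tendsto_survivalProb hdeg hS hv).const_mul M
  rw [mul_zero] at hlim
  exact abs_nonpos_iff.1
    (ge_of_tendsto' hlim fun n => abs_le_mul_survivalProb hdeg hM hzero hharm n v)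

lemma eq_mul_hitProb_of_discLap_eq_zero (hdeg : ∀ v, 0 < G.degree v) (hS : ReachableSet G S)
    {x : V} (hx : x ∉ S) {h : V → ℝ} (hbdd : ∃ M, ∀ v, |h v| ≤ M) (hzero : ∀ v ∈ S, h v = 0)
    (hharm : ∀ v ∉ S, v ≠ x → discLap G h v = 0) :
    h = fun v => h x * G.hitProb S x v := by
  obtain ⟨M, hM⟩ := hbdd
  refine sub_eq_zero.1 (eq_zero_of_bounded_of_discLap_eq_zero hdeg (hS.mono (Set.subset_insert x S))
    ⟨M + |h x|, fun v => ?_⟩ (fun v hv => ?_) fun v hv => ?_)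
  · calc |h v - h x * G.hitProb S x v| ≤ |h v| + |h x| * |G.hitProb S x v| := by
          rw [← abs_mul]; exact abs_sub _ _
      _ ≤ M + |h x| * 1 := by
          gcongr
          · exact hM v
          · rw [abs_of_nonneg (hitProb_nonneg v)]; exact hitProb_le_one v
      _ = M + |h x| := by rw [mul_one]
  · rcases hv with rfl | hv
    · simp [hitProb_self]
    · simp [hzero v hv, hitProb_of_mem hv (ne_of_mem_of_not_mem hv hx)]
  · simp only [Set.mem_insert_iff, not_or] at hv
    rw [discLap_sub, discLap_const_mul, hharm v hv.2 hv.1, discLap_hitProb_of_notMem hv.2 hv.1]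
    simp

end Reachable

end SimpleGraph

open SimpleGraph

/-- **Existence and uniqueness of the normalized discrete harmonic function `h`**
(Lemma 2.1, first part): if `A`, `B` are disjoint, `A ∪ B` is reachable, and
`x ∉ A ∪ B` is joined to `A` by a path avoiding `B`, then there is a unique
nonnegative bounded `h : V → ℝ` vanishing on `A ∪ B`, discrete harmonic off
`A ∪ B ∪ {x}`, with `Σ_{v ∈ A} Δ_G h (v) = 1`. -/
theorem exists_unique_normalized_harmonic {V : Type*} (G : SimpleGraph V)
    [∀ v : V, Fintype (G.neighborSet v)] (hconn : G.Connected)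
    (A B : Set V) (hdisj : Disjoint A B) (hreach : ReachableSet G (A ∪ B))
    (x : V) (hx : x ∉ A ∪ B)
    (hpath : ∃ (a : V) (p : G.Walk x a), a ∈ A ∧ ∀ v ∈ p.support, v ∉ B) :
    ∃! h : V → ℝ,
      (∀ v, 0 ≤ h v) ∧ (∃ M : ℝ, ∀ v, h v ≤ M) ∧
      (∀ v ∈ A ∪ B, h v = 0) ∧
      (∀ v, v ∉ A ∪ B ∪ {x} → discLap G h v = 0) ∧
      (∑' a : A, discLap G h a = 1) := by
  obtain ⟨a, W, ha, hWB⟩ := hpath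
  have hxA : x ∉ A := fun h => hx (Or.inl h)
  have : Nontrivial V := ⟨x, a, ne_of_mem_of_not_mem ha hxA |>.symm⟩
  have hdeg : ∀ v, 0 < G.degree v := fun v => hconn.preconnected.degree_pos_of_nontrivial v
  set f := G.hitProb (A ∪ B) x
  set Z := ∑' a : A, discLap G f a
  have hZ : 0 < Z := tsum_discLap_hitProb_pos W ha hWB hxA
  refine ⟨fun v => Z⁻¹ * f v,
    ⟨fun v => mul_nonneg (inv_nonneg.2 hZ.le) (hitProb_nonneg v), ?_, ?_, ?_, ?_⟩, ?_⟩
  · exact ⟨Z⁻¹, fun v => mul_le_of_le_one_right (inv_nonneg.2 hZ.le) (hitProb_le_one v)⟩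
  · intro v hv
    simp [f, hitProb_of_mem hv (ne_of_mem_of_not_mem hv hx)]
  · intro v hv
    simp only [Set.union_singleton, Set.mem_insert_iff, not_or] at hv
    rw [discLap_const_mul, discLap_hitProb_of_notMem hv.2 hv.1, mul_zero]
  · simp only [discLap_const_mul, tsum_mul_left, Z, inv_mul_cancel₀ hZ.ne']
  · rintro h ⟨hnn, ⟨M, hM⟩, hzero, hharm, hnorm⟩
    have hh : h = fun v => h x * f v := eq_mul_hitProb_of_discLap_eq_zero hdeg hreach hx
      ⟨M, fun v => (abs_of_nonneg (hnn v)).trans_le (hM v)⟩ hzero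
      fun v hv hvx => hharm v (by simp [hv, hvx])
    have hhZ : h x * Z = 1 := by
      rw [hh] at hnorm
      simpa only [discLap_const_mul, tsum_mul_left] using hnorm
    rw [hh, eq_inv_of_mul_eq_one_left hhZ]
end

section
/- If H is a nonempty hull in ℍ w.r.t. ∞, then the extension of φ_H^{-1} satisfies φ_H^{-1}(x) > x for every x ∈ (−∞, c_H) and φ_H^{-1}(x) < x for every x ∈ (d_H, +∞); equivalently φ_H(x) < x for x ∈ (−∞, a_H) and φ_H(x) > x for x ∈ (b_H, +∞). Consequently [a_H, b_H] ⊆ [c_H, d_H] for any hull H. -/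
open Complex Set Filter

noncomputable section

/-- The open upper half plane `ℍ`. -/
def UpperHalf : Set ℂ := {z : ℂ | 0 < z.im}

/-- The real segment `[a, b]` viewed as a subset of `ℂ`. -/
def realSeg (a b : ℝ) : Set ℂ := (fun x : ℝ => (x : ℂ)) '' Set.Icc a b

/-- A hull in `ℍ` w.r.t. `∞`: a bounded, relatively closed subset of `ℍ` with
simply connected complement in `ℍ`. -/
def IsHull (H : Set ℂ) : Prop :=
  H ⊆ UpperHalf ∧ Bornology.IsBounded H ∧
    (∃ C : Set ℂ, IsClosed C ∧ H = C ∩ UpperHalf) ∧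
    SimplyConnectedSpace ↥(UpperHalf \ H)

/-- `φ` maps `ℍ \ H` conformally onto `ℍ` with hydrodynamic normalization
`φ(z) = z + c/z + O(1/z²)` at `∞`; then `c = hcap H` is the half-plane capacity. -/
def IsHydroMapOn (H : Set ℂ) (φ : ℂ → ℂ) (c : ℝ) : Prop :=
  Set.BijOn φ (UpperHalf \ H) UpperHalf ∧
  DifferentiableOn ℂ φ (UpperHalf \ H) ∧
  Filter.Tendsto (fun z : ℂ => (φ z - z) * z)
    (Filter.comap (fun z : ℂ => ‖z‖) Filter.atTop ⊓ Filter.principal (UpperHalf \ H))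
    (nhds (c : ℂ))

/-- `ψ` is a conformal extension of `φ⁻¹` (the inverse of the normalized map of the
hull `H`) to `ℂ \ [c, d]`. -/
def ExtendsInvTo (H : Set ℂ) (φ ψ : ℂ → ℂ) (c d : ℝ) : Prop :=
  DifferentiableOn ℂ ψ (realSeg c d)ᶜ ∧
  ∀ z ∈ UpperHalf, ψ z ∈ UpperHalf \ H ∧ φ (ψ z) = z

/-- `[c, d]` is the minimal closed interval such that `φ⁻¹` extends conformally to
`ℂ \ [c, d]`. -/
def IsMinExtInterval (H : Set ℂ) (φ : ℂ → ℂ) (c d : ℝ) : Prop :=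
  c ≤ d ∧ (∃ ψ : ℂ → ℂ, ExtendsInvTo H φ ψ c d) ∧
  ∀ c' d' : ℝ, (∃ ψ : ℂ → ℂ, ExtendsInvTo H φ ψ c' d') → Set.Icc c d ⊆ Set.Icc c' d'

/-! `ψ = φ⁻¹` is a holomorphic self-map of `ℍ` which, by the hydrodynamic normalization and a
Rouché-type argument, stays close to the identity high up on the imaginary axis. Julia's lemma
(Schwarz–Pick at the boundary point `∞`) then gives `Im ψ w ≥ Im w`. On the rays `(-∞, c_H)` and
`(d_H, ∞)`, where `ψ` is real, this forces `ψ' ≥ 1`, so `ψ y - y` is nondecreasing; as it tends to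
`0` at `∓∞` (normalization again), it is `≥ 0` on the left ray and `≤ 0` on the right one. Equality
at one point would make `ψ` the identity on a real interval, hence on `ℂ \ [c_H, d_H]`, which is
impossible as `ψ` omits the nonempty set `H`. The claims about `φ` follow by substituting
`y = φ x`. -/

open Metric Topology ComplexConjugate

theorem isOpen_upperHalf : IsOpen UpperHalf := isOpen_lt continuous_const continuous_im

theorem normSq_sub_conj_sub_normSq_sub (a b : ℂ) :
    normSq (a - conj b) - normSq (a - b) = 4 * a.im * b.im := by
  simp only [normSq_apply, sub_re, sub_im, conj_re, conj_im]
  ring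

theorem sub_conj_ne_zero {a b : ℂ} (ha : 0 < a.im) (hb : 0 < b.im) : a - conj b ≠ 0 := by
  intro h
  have := congrArg Complex.im h
  simp only [sub_im, conj_im, zero_im] at this
  linarith

theorem tendsto_div_ofReal_of_eventually_norm_sub_le {g : ℝ → ℂ} {v : ℂ} {M : ℝ}
    (h : ∀ᶠ t in atTop, ‖g t - t * v‖ ≤ M) : Tendsto (fun t : ℝ => g t / t) atTop (𝓝 v) := by
  have hsmall : Tendsto (fun t : ℝ => (g t - t * v) / t) atTop (𝓝 0) := by
    refine squeeze_zero_norm' ?_ ((tendsto_const_nhds (x := M)).div_atTop tendsto_id)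
    filter_upwards [h, eventually_gt_atTop 0] with t ht htpos
    rw [norm_div, norm_real, Real.norm_of_nonneg htpos.le]
    exact div_le_div_of_nonneg_right ht htpos.le
  refine (by simpa using hsmall.const_add v : Tendsto _ _ _).congr' ?_
  filter_upwards [eventually_ne_atTop 0] with t ht
  have : (t : ℂ) ≠ 0 := ofReal_ne_zero.2 ht
  field_simp
  ring

theorem exists_mem_closedBall_eq_of_norm_sub_le {f : ℂ → ℂ} {w : ℂ} {ρ ε : ℝ}
    (hf : DifferentiableOn ℂ f (closedBall w ρ)) (hε : 0 ≤ ε) (hερ : 2 * ε < ρ)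
    (hfε : ∀ z ∈ closedBall w ρ, ‖f z - z‖ ≤ ε) : ∃ z ∈ closedBall w ρ, f z = w := by
  by_contra! hne
  have hρ : 0 < ρ := by linarith
  -- minimum modulus principle, applied as the maximum modulus principle to `(f - w)⁻¹`
  have hg : DiffContOnCl ℂ (fun z => (f z - w)⁻¹) (ball w ρ) := by
    refine DifferentiableOn.diffContOnCl ?_
    rw [closure_ball w hρ.ne']
    exact (hf.sub_const w).inv fun z hz => sub_ne_zero.2 (hne z hz)
  have hsphere : ∀ z ∈ frontier (ball w ρ), ‖(f z - w)⁻¹‖ ≤ (ρ - ε)⁻¹ := by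
    intro z hz
    rw [frontier_ball w hρ.ne'] at hz
    have hfz := hfε z (sphere_subset_closedBall hz)
    have hzw : ‖z - w‖ = ρ := by rwa [mem_sphere, dist_eq_norm] at hz
    have : ρ - ε ≤ ‖f z - w‖ := by
      have := norm_sub_le_norm_sub_add_norm_sub z (f z) w
      rw [norm_sub_rev z (f z)] at this
      linarith
    rw [norm_inv]
    exact inv_anti₀ (by linarith) this
  have hcentre := Complex.norm_le_of_forall_mem_frontier_norm_le isBounded_ball hg hsphere
    (subset_closure (mem_ball_self hρ))
  have hpos : 0 < ‖f w - w‖ := norm_pos_iff.2 (sub_ne_zero.2 (hne w (mem_closedBall_self hρ.le)))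
  rw [norm_inv, inv_le_inv₀ hpos (by linarith)] at hcentre
  linarith [hfε w (mem_closedBall_self hρ.le)]

namespace UpperHalf

/-- The Möbius map of `ℍ` onto the unit disc sending `w₀` to `0`. -/
def toDisc (w₀ z : ℂ) : ℂ := (z - w₀) / (z - conj w₀)

def ofDisc (w₀ ζ : ℂ) : ℂ := (w₀ - conj w₀ * ζ) / (1 - ζ)

theorem one_sub_normSq_toDisc {w₀ z : ℂ} (hz : 0 < z.im) (hw₀ : 0 < w₀.im) :
    1 - normSq (toDisc w₀ z) = 4 * z.im * w₀.im / normSq (z - conj w₀) := by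
  have hpos : 0 < normSq (z - conj w₀) := normSq_pos.2 (sub_conj_ne_zero hz hw₀)
  rw [toDisc, normSq_div, eq_div_iff hpos.ne', sub_mul, div_mul_cancel₀ _ hpos.ne',
    ← normSq_sub_conj_sub_normSq_sub]
  ring

theorem norm_toDisc_lt_one {w₀ z : ℂ} (hz : 0 < z.im) (hw₀ : 0 < w₀.im) :
    ‖toDisc w₀ z‖ < 1 := by
  have h := one_sub_normSq_toDisc hz hw₀
  have : 0 < 4 * z.im * w₀.im / normSq (z - conj w₀) :=
    div_pos (by positivity) (normSq_pos.2 (sub_conj_ne_zero hz hw₀))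
  rw [← sq_lt_one_iff₀ (norm_nonneg _), Complex.sq_norm]
  linarith

theorem im_ofDisc_pos {w₀ ζ : ℂ} (hw₀ : 0 < w₀.im) (hζ : ‖ζ‖ < 1) :
    0 < (ofDisc w₀ ζ).im := by
  have h1 : 1 - ζ ≠ 0 := sub_ne_zero.2 (ne_of_apply_ne norm (by rw [norm_one]; exact hζ.ne'))
  have hζ' : normSq ζ < 1 := by
    rw [← Complex.sq_norm]; nlinarith [norm_nonneg ζ]
  have hnum : (w₀ - conj w₀ * ζ).im * (1 - ζ).re - (w₀ - conj w₀ * ζ).re * (1 - ζ).im =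
      w₀.im * (1 - normSq ζ) := by
    simp only [sub_im, sub_re, mul_im, mul_re, conj_re, conj_im, one_re, one_im, normSq_apply]
    ring
  rw [ofDisc, div_im, ← sub_div, hnum]
  exact div_pos (mul_pos hw₀ (by linarith)) (normSq_pos.2 h1)

theorem ofDisc_toDisc {w₀ z : ℂ} (hz : 0 < z.im) (hw₀ : 0 < w₀.im) :
    ofDisc w₀ (toDisc w₀ z) = z := by
  have hd := sub_conj_ne_zero hz hw₀
  have hw := sub_conj_ne_zero hw₀ hw₀
  rw [ofDisc, toDisc, div_eq_iff]
  · field_simp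
    ring
  · rw [one_sub_div hd]
    exact div_ne_zero (by rwa [sub_sub_sub_cancel_left]) hd

/-- Schwarz–Pick lemma for holomorphic self-maps of `ℍ`. -/
theorem norm_toDisc_le {F : ℂ → ℂ} (hd : DifferentiableOn ℂ F UpperHalf)
    (hm : MapsTo F UpperHalf UpperHalf) {w w₀ : ℂ} (hw : 0 < w.im) (hw₀ : 0 < w₀.im) :
    ‖toDisc (F w₀) (F w)‖ ≤ ‖toDisc w₀ w‖ := by
  have hFw₀ : 0 < (F w₀).im := hm hw₀
  set G : ℂ → ℂ := fun ζ => toDisc (F w₀) (F (ofDisc w₀ ζ))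
  have hmaps : MapsTo (ofDisc w₀) (ball 0 1) UpperHalf := fun ζ hζ =>
    im_ofDisc_pos hw₀ (mem_ball_zero_iff.1 hζ)
  have hGd : DifferentiableOn ℂ G (ball 0 1) := by
    intro ζ hζ
    have hζ1 : 1 - ζ ≠ 0 :=
      sub_ne_zero.2 (ne_of_apply_ne norm (by rw [norm_one]; exact (mem_ball_zero_iff.1 hζ).ne'))
    have hS : DifferentiableAt ℂ (ofDisc w₀) ζ :=
      ((differentiableAt_const _).sub ((differentiableAt_const _).mul differentiableAt_id)).div
        ((differentiableAt_const _).sub differentiableAt_id) hζ1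
    have hF : DifferentiableAt ℂ (fun ζ => F (ofDisc w₀ ζ)) ζ :=
      (hd.differentiableAt (isOpen_upperHalf.mem_nhds (hmaps hζ))).comp ζ hS
    exact ((hF.sub_const _).div (hF.sub_const _)
      (sub_conj_ne_zero (hm (hmaps hζ)) hFw₀)).differentiableWithinAt
  have hGmaps : MapsTo G (ball 0 1) (closedBall 0 1) := fun ζ hζ =>
    mem_closedBall_zero_iff.2 (norm_toDisc_lt_one (hm (hmaps hζ)) hFw₀).le
  have hG0 : G 0 = 0 := by simp [G, ofDisc, toDisc]
  have := Complex.norm_le_norm_of_mapsTo_ball hGd hGmaps hG0 (norm_toDisc_lt_one hw hw₀)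
  simpa only [G, ofDisc_toDisc hw hw₀] using this

theorem im_mul_im_mul_normSq_le {F : ℂ → ℂ} (hd : DifferentiableOn ℂ F UpperHalf)
    (hm : MapsTo F UpperHalf UpperHalf) {w w₀ : ℂ} (hw : 0 < w.im) (hw₀ : 0 < w₀.im) :
    w.im * w₀.im * normSq (F w - conj (F w₀)) ≤ (F w).im * (F w₀).im * normSq (w - conj w₀) := by
  have hsq : normSq (toDisc (F w₀) (F w)) ≤ normSq (toDisc w₀ w) := by
    rw [← Complex.sq_norm, ← Complex.sq_norm]
    exact pow_le_pow_left₀ (norm_nonneg _) (norm_toDisc_le hd hm hw hw₀) 2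
  have hF := one_sub_normSq_toDisc (hm hw) (hm hw₀)
  have hid := one_sub_normSq_toDisc hw hw₀
  have hle : 4 * w.im * w₀.im / normSq (w - conj w₀) ≤
      4 * (F w).im * (F w₀).im / normSq (F w - conj (F w₀)) := by linarith
  rw [div_le_div_iff₀ (normSq_pos.2 (sub_conj_ne_zero hw hw₀))
    (normSq_pos.2 (sub_conj_ne_zero (hm hw) (hm hw₀)))] at hle
  linarith

/-- Julia's lemma at the boundary point `∞`. -/
theorem im_le_im_of_eventually_norm_sub_le {F : ℂ → ℂ} {M : ℝ}
    (hd : DifferentiableOn ℂ F UpperHalf) (hm : MapsTo F UpperHalf UpperHalf)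
    (hM : ∀ᶠ t : ℝ in atTop, ‖F (t * I) - t * I‖ ≤ M) {w : ℂ} (hw : 0 < w.im) :
    w.im ≤ (F w).im := by
  have hconj (t : ℝ) : conj ((t : ℂ) * I) = -(t * I) := by simp
  have ha := tendsto_div_ofReal_of_eventually_norm_sub_le hM
  have hb : Tendsto (fun t : ℝ => (F w - conj (F (t * I))) / t) atTop (𝓝 I) := by
    refine tendsto_div_ofReal_of_eventually_norm_sub_le (M := ‖F w‖ + M) ?_
    filter_upwards [hM] with t ht
    calc ‖F w - conj (F (t * I)) - t * I‖ = ‖F w - conj (F (t * I) - t * I)‖ := by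
          rw [map_sub, hconj]; ring_nf
      _ ≤ ‖F w‖ + M := (norm_sub_le _ _).trans (by rw [Complex.norm_conj]; linarith)
  have hc : Tendsto (fun t : ℝ => (w + t * I) / t) atTop (𝓝 I) :=
    tendsto_div_ofReal_of_eventually_norm_sub_le (M := ‖w‖) (by simp)
  have hle : ∀ᶠ t : ℝ in atTop, w.im * normSq ((F w - conj (F (t * I))) / t) ≤
      (F w).im * (F (t * I) / t).im * normSq ((w + t * I) / t) := by
    filter_upwards [eventually_gt_atTop 0] with t ht
    -- Schwarz–Pick at `w₀ = t I`, divided by `t³`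
    have hSP := im_mul_im_mul_normSq_le hd hm hw (w₀ := t * I) (by simpa using ht)
    rw [hconj, sub_neg_eq_add] at hSP
    simp only [mul_I_im, ofReal_re] at hSP
    rw [div_ofReal_im, normSq_div, normSq_div, normSq_ofReal]
    calc w.im * (normSq (F w - conj (F (t * I))) / (t * t))
        = w.im * t * normSq (F w - conj (F (t * I))) / t ^ 3 := by field_simp
      _ ≤ (F w).im * (F (t * I)).im * normSq (w + t * I) / t ^ 3 := by gcongr
      _ = (F w).im * ((F (t * I)).im / t) * (normSq (w + t * I) / (t * t)) := by field_simp
  have hlim := le_of_tendsto_of_tendsto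
    (((continuous_normSq.tendsto I).comp hb).const_mul w.im)
    ((((continuous_im.tendsto I).comp ha).const_mul (F w).im).mul
      ((continuous_normSq.tendsto I).comp hc)) hle
  simpa using hlim

end UpperHalf

theorem self_le_of_monotoneOn_sub_Iio {f : ℝ → ℝ} {c R C : ℝ}
    (hmono : MonotoneOn (fun y => f y - y) (Iio c))
    (hbound : ∀ y < c, R < |f y| → |y - f y| * |f y| ≤ C) {y : ℝ} (hy : y < c) : y ≤ f y := by
  -- otherwise `f y₁ ≤ y₁ - (y - f y)` for all `y₁ ≤ y`, against the bound as `y₁ → -∞`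
  by_contra! hfy
  have hm : 0 < y - f y := sub_pos.2 hfy
  obtain ⟨y₁, hy₁, hy₁R, hy₁C⟩ := ((eventually_le_atBot y).and
    ((eventually_lt_atBot (-|R|)).and (eventually_lt_atBot (-(C / (y - f y)))))).exists
  have hmono₁ : f y₁ - y₁ ≤ f y - y := hmono (hy₁.trans_lt hy) hy hy₁
  have hf₁ : |f y₁| = -f y₁ := abs_of_neg (by linarith [abs_nonneg R])
  have hsub₁ : |y₁ - f y₁| = y₁ - f y₁ := abs_of_pos (by linarith)
  have hb := hbound y₁ (hy₁.trans_lt hy) (by rw [hf₁]; linarith [le_abs_self R])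
  rw [hf₁, hsub₁] at hb
  have hC : C < (y - f y) * -f y₁ := by
    rw [← div_lt_iff₀' hm]; linarith
  nlinarith [mul_le_mul_of_nonneg_right (show y - f y ≤ y₁ - f y₁ by linarith)
    (show 0 ≤ -f y₁ by linarith [abs_nonneg R])]

theorem self_lt_of_monotoneOn_sub_Iio {f : ℝ → ℝ} {c R C : ℝ}
    (hmono : MonotoneOn (fun y => f y - y) (Iio c))
    (hbound : ∀ y < c, R < |f y| → |y - f y| * |f y| ≤ C)
    (hid : ∀ x < c, ¬ ∀ᶠ y in 𝓝 x, f y = y) {y : ℝ} (hy : y < c) : y < f y := by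
  refine (self_le_of_monotoneOn_sub_Iio hmono hbound hy).lt_of_ne fun heq =>
    hid (y - 1) (by linarith) ?_
  filter_upwards [Iic_mem_nhds (show y - 1 < y by linarith)] with x hx
  have h1 := self_le_of_monotoneOn_sub_Iio hmono hbound (hx.trans_lt hy)
  have h2 : f x - x ≤ f y - y := hmono (hx.trans_lt hy) hy hx
  linarith

theorem lt_self_of_monotoneOn_sub_Ioi {f : ℝ → ℝ} {d R C : ℝ}
    (hmono : MonotoneOn (fun y => f y - y) (Ioi d))
    (hbound : ∀ y, d < y → R < |f y| → |y - f y| * |f y| ≤ C)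
    (hid : ∀ x, d < x → ¬ ∀ᶠ y in 𝓝 x, f y = y) {y : ℝ} (hy : d < y) : f y < y := by
  have key := self_lt_of_monotoneOn_sub_Iio (f := fun y => -f (-y)) (c := -d) (R := R) (C := C)
    ?_ ?_ ?_ (neg_lt_neg hy)
  · simp only [neg_neg] at key
    linarith
  · intro a (ha : a < -d) b (hb : b < -d) hab
    have := hmono (show d < -b by linarith) (show d < -a by linarith) (neg_le_neg hab)
    simp only at this ⊢
    linarith
  · intro x hx h
    have := hbound (-x) (by linarith) (by rwa [abs_neg] at h)
    rwa [abs_neg, show x - -f (-x) = -(-x - f (-x)) by ring, abs_neg]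
  · intro x hx h
    refine hid (-x) (by linarith) ?_
    have := (continuous_neg.tendsto' (-x) x (neg_neg x)).eventually h
    filter_upwards [this] with y hy
    simp only [neg_neg] at hy
    linarith

theorem one_le_re_deriv_of_le_im {ψ : ℂ → ℂ} {y : ℝ} (hd : DifferentiableAt ℂ ψ y)
    (hy : (ψ y).im = 0) (him : ∀ t : ℝ, 0 < t → t ≤ (ψ (y + t * I)).im) :
    1 ≤ (deriv ψ y).re := by
  have hpath : HasDerivAt (fun z : ℂ => (y : ℂ) + z * I) I ((0 : ℝ) : ℂ) := by
    simpa using ((hasDerivAt_id (0 : ℂ)).mul_const I).const_add (y : ℂ)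
  -- `Im ψ(y + tI) = Re (-I ψ(y + tI))`
  have hvert : HasDerivAt (fun t : ℝ => (ψ (y + t * I)).im) (deriv ψ y).re 0 := by
    have := ((hd.hasDerivAt.comp_of_eq _ hpath (by simp)).const_mul (-I)).real_of_complex
    convert this using 1
    · ext t; simp
    · simp [mul_comm, ← mul_assoc]
  refine ge_of_tendsto hvert.tendsto_slope_zero_right ?_
  filter_upwards [self_mem_nhdsWithin] with t (ht : 0 < t)
  rw [zero_add, smul_eq_mul, le_inv_mul_iff₀ ht]
  simpa [hy] using him t ht

theorem monotoneOn_re_sub_of_le_im {ψ : ℂ → ℂ} {S : Set ℝ} (hS : Convex ℝ S) (hSo : IsOpen S)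
    (hd : ∀ y ∈ S, DifferentiableAt ℂ ψ y) (hreal : ∀ y ∈ S, (ψ y).im = 0)
    (him : ∀ w : ℂ, 0 < w.im → w.im ≤ (ψ w).im) :
    MonotoneOn (fun y : ℝ => (ψ y).re - y) S := by
  have hderiv : ∀ y ∈ S, HasDerivAt (fun y : ℝ => (ψ y).re - y) ((deriv ψ y).re - 1) y :=
    fun y hy => (hd y hy).hasDerivAt.real_of_complex.sub (hasDerivAt_id y)
  refine monotoneOn_of_hasDerivWithinAt_nonneg hS
    (fun y hy => (hderiv y hy).continuousAt.continuousWithinAt)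
    (fun y hy => (hderiv y (interior_subset hy)).hasDerivWithinAt) fun y hy => ?_
  rw [hSo.interior_eq] at hy
  exact sub_nonneg.2 (one_le_re_deriv_of_le_im (hd y hy) (hreal y hy) fun t ht => by
    simpa using him (y + t * I) (by simpa using ht))

theorem norm_sub_mul_norm_le_of_continuousAt {ψ : ℂ → ℂ} {R C : ℝ} {z : ℂ} (hz : 0 ≤ z.im)
    (hψ : ContinuousAt ψ z) (hR : R < ‖ψ z‖)
    (hbound : ∀ w : ℂ, 0 < w.im → R ≤ ‖ψ w‖ → ‖w - ψ w‖ * ‖ψ w‖ ≤ C) :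
    ‖z - ψ z‖ * ‖ψ z‖ ≤ C := by
  have : (𝓝[UpperHalf] z).NeBot := mem_closure_iff_nhdsWithin_neBot.1 <| by
    rwa [UpperHalf, closure_setOfPred_lt_im]
  have hψ' : Tendsto ψ (𝓝[UpperHalf] z) (𝓝 (ψ z)) := hψ.mono_left nhdsWithin_le_nhds
  refine le_of_tendsto (((tendsto_nhdsWithin_of_tendsto_nhds tendsto_id).sub hψ').norm.mul
    hψ'.norm) ?_
  filter_upwards [self_mem_nhdsWithin, hψ'.norm.eventually (eventually_gt_nhds hR)]
    with w hw hRw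
  exact hbound w hw hRw.le

theorem self_lt_re_of_le_im_Iio {ψ : ℂ → ℂ} {c R C : ℝ}
    (hd : ∀ y < c, DifferentiableAt ℂ ψ y) (hreal : ∀ y < c, (ψ y).im = 0)
    (him : ∀ w : ℂ, 0 < w.im → w.im ≤ (ψ w).im)
    (hbound : ∀ w : ℂ, 0 < w.im → R ≤ ‖ψ w‖ → ‖w - ψ w‖ * ‖ψ w‖ ≤ C)
    (hid : ∀ x < c, ¬ ∀ᶠ y : ℝ in 𝓝 x, ψ y = y) {y : ℝ} (hy : y < c) : y < (ψ y).re := by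
  have hψ : ∀ y < c, ψ y = ((ψ y).re : ℂ) := fun y hy => ext rfl (by simp [hreal y hy])
  refine self_lt_of_monotoneOn_sub_Iio (R := R) (C := C)
    (monotoneOn_re_sub_of_le_im (convex_Iio c) isOpen_Iio hd hreal him) (fun y hy hR => ?_)
    (fun x hx h => hid x hx ?_) hy
  · have := norm_sub_mul_norm_le_of_continuousAt (by simp) (hd y hy).continuousAt
      (by rwa [hψ y hy, norm_real, Real.norm_eq_abs]) hbound
    rwa [hψ y hy, ← ofReal_sub, norm_real, norm_real, Real.norm_eq_abs, Real.norm_eq_abs] at this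
  · filter_upwards [h, Iio_mem_nhds hx] with y hy hyc
    rw [hψ y hyc, hy]

theorem re_lt_self_of_le_im_Ioi {ψ : ℂ → ℂ} {d R C : ℝ}
    (hd : ∀ y, d < y → DifferentiableAt ℂ ψ y) (hreal : ∀ y, d < y → (ψ y).im = 0)
    (him : ∀ w : ℂ, 0 < w.im → w.im ≤ (ψ w).im)
    (hbound : ∀ w : ℂ, 0 < w.im → R ≤ ‖ψ w‖ → ‖w - ψ w‖ * ‖ψ w‖ ≤ C)
    (hid : ∀ x, d < x → ¬ ∀ᶠ y : ℝ in 𝓝 x, ψ y = y) {y : ℝ} (hy : d < y) : (ψ y).re < y := by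
  have hψ : ∀ y, d < y → ψ y = ((ψ y).re : ℂ) := fun y hy => ext rfl (by simp [hreal y hy])
  refine lt_self_of_monotoneOn_sub_Ioi (R := R) (C := C)
    (monotoneOn_re_sub_of_le_im (convex_Ioi d) isOpen_Ioi hd hreal him) (fun y hy hR => ?_)
    (fun x hx h => hid x hx ?_) hy
  · have := norm_sub_mul_norm_le_of_continuousAt (by simp) (hd y hy).continuousAt
      (by rwa [hψ y hy, norm_real, Real.norm_eq_abs]) hbound
    rwa [hψ y hy, ← ofReal_sub, norm_real, norm_real, Real.norm_eq_abs, Real.norm_eq_abs] at this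
  · filter_upwards [h, Ioi_mem_nhds hx] with y hy hyd
    rw [hψ y hyd, hy]

theorem AnalyticOnNhd.eqOn_of_preconnected_of_eventually_eq_real {f g : ℂ → ℂ} {U : Set ℂ}
    {x : ℝ} (hf : AnalyticOnNhd ℂ f U) (hg : AnalyticOnNhd ℂ g U) (hU : IsPreconnected U)
    (hx : (x : ℂ) ∈ U) (h : ∀ᶠ y : ℝ in 𝓝 x, f y = g y) : EqOn f g U := by
  have hreal : Tendsto ((↑) : ℝ → ℂ) (𝓝[≠] x) (𝓝[≠] (x : ℂ)) :=
    tendsto_nhdsWithin_of_tendsto_nhds_of_eventually_within _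
      (continuous_ofReal.continuousAt.mono_left nhdsWithin_le_nhds)
      (eventually_nhdsWithin_of_forall fun y hy => ofReal_injective.ne hy)
  exact hf.eqOn_of_preconnected_of_frequently_eq hg hU hx
    (hreal.frequently (h.filter_mono nhdsWithin_le_nhds).frequently)

theorem mem_realSeg_iff {c d : ℝ} {z : ℂ} : z ∈ realSeg c d ↔ z.im = 0 ∧ z.re ∈ Icc c d := by
  constructor
  · rintro ⟨x, hx, rfl⟩
    simpa using hx
  · rintro ⟨him, hre⟩
    exact ⟨z.re, hre, ext rfl (by simp [him])⟩

theorem ofReal_notMem_realSeg_of_lt {c d y : ℝ} (h : y < c) : (y : ℂ) ∉ realSeg c d := by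
  simpa [mem_realSeg_iff] using notMem_Icc_of_lt h

theorem ofReal_notMem_realSeg_of_gt {c d y : ℝ} (h : d < y) : (y : ℂ) ∉ realSeg c d := by
  simpa [mem_realSeg_iff] using notMem_Icc_of_gt h

theorem isOpen_compl_realSeg (c d : ℝ) : IsOpen (realSeg c d)ᶜ :=
  (isCompact_Icc.image continuous_ofReal).isClosed.isOpen_compl

theorem isPreconnected_compl_realSeg (c d : ℝ) : IsPreconnected (realSeg c d)ᶜ := by
  -- the union of the half-planes `Re < c`, `Im > 0`, `Im < 0` and `Re > d`, chained in this order
  have hupper : IsPreconnected ({z : ℂ | z.re < c} ∪ {z | 0 < z.im}) :=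
    (convex_halfSpace_re_lt c).isPreconnected.union ((c - 1 : ℝ) + I) (by simp) (by simp)
      (convex_halfSpace_im_gt 0).isPreconnected
  have hlower : IsPreconnected ({z : ℂ | z.re < c} ∪ {z | 0 < z.im} ∪ {z | z.im < 0}) :=
    hupper.union ((c - 1 : ℝ) - I) (by simp) (by simp) (convex_halfSpace_im_lt 0).isPreconnected
  have hall := hlower.union ((d + 1 : ℝ) + I) (by simp) (by simp)
    (convex_halfSpace_re_gt d).isPreconnected
  convert hall using 1
  ext z
  simp only [mem_compl_iff, mem_realSeg_iff, mem_Icc, mem_union, mem_ofPred_eq]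
  constructor
  · intro h
    rcases lt_trichotomy z.im 0 with h' | h' | h'
    · tauto
    · by_contra!; exact h ⟨h', by linarith, by linarith⟩
    · tauto
  · rintro (((h | h) | h) | h) ⟨him, hc, hd⟩ <;> linarith

theorem IsHydroMapOn.exists_norm_sub_mul_norm_le {H : Set ℂ} {φ : ℂ → ℂ} {c : ℝ}
    (hφ : IsHydroMapOn H φ c) :
    ∃ C R : ℝ, ∀ z ∈ UpperHalf \ H, R ≤ ‖z‖ → ‖φ z - z‖ * ‖z‖ ≤ C := by
  have hev := (hφ.2.2.norm).eventually (eventually_lt_nhds (lt_add_one ‖(c : ℂ)‖))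
  rw [eventually_inf_principal, eventually_comap] at hev
  obtain ⟨R, hR⟩ := eventually_atTop.1 hev
  exact ⟨_, R, fun z hz hRz => by simpa only [← norm_mul] using (hR _ hRz z rfl hz).le⟩

theorem eventually_norm_sub_le_one {H : Set ℂ} {φ ψ : ℂ → ℂ} {C R : ℝ}
    (hbdd : Bornology.IsBounded H) (hinj : InjOn φ (UpperHalf \ H))
    (hd : DifferentiableOn ℂ φ (UpperHalf \ H))
    (hψ : ∀ w ∈ UpperHalf, ψ w ∈ UpperHalf \ H ∧ φ (ψ w) = w)
    (hC : ∀ z ∈ UpperHalf \ H, R ≤ ‖z‖ → ‖φ z - z‖ * ‖z‖ ≤ C) :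
    ∀ᶠ t : ℝ in atTop, ‖ψ (t * I) - t * I‖ ≤ 1 := by
  -- on the disc of radius `t / 2` about `t I`, `φ` is `2|C|/t`-close to the identity
  obtain ⟨T, hT⟩ := hbdd.subset_closedBall 0
  filter_upwards [eventually_gt_atTop (2 * T), eventually_ge_atTop (2 * R),
    eventually_ge_atTop (8 * |C| + 1)] with t hT' hR' hC'
  have ht : 0 < t := by linarith [abs_nonneg C]
  have htI : 0 < ((t : ℂ) * I).im := by simpa using ht
  have hball : ∀ z ∈ closedBall ((t : ℂ) * I) (t / 2),
      z ∈ UpperHalf \ H ∧ ‖φ z - z‖ ≤ 2 * |C| / t := by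
    intro z hz
    have him : t / 2 ≤ z.im := by
      have := (abs_le.1 ((abs_im_le_norm (z - t * I)).trans (mem_closedBall_iff_norm.1 hz))).1
      simp only [sub_im, mul_I_im, ofReal_re] at this
      linarith
    have hnorm : t / 2 ≤ ‖z‖ := him.trans ((le_abs_self _).trans (abs_im_le_norm z))
    have hzH : z ∈ UpperHalf \ H := ⟨show 0 < z.im by linarith,
      fun hzH => by linarith [mem_closedBall_zero_iff.1 (hT hzH)]⟩
    refine ⟨hzH, ?_⟩
    rw [le_div_iff₀ ht]
    nlinarith [hC z hzH (by linarith), le_abs_self C, norm_nonneg (φ z - z)]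
  obtain ⟨z, hz, hφz⟩ := exists_mem_closedBall_eq_of_norm_sub_le
    (hd.mono fun z hz => (hball z hz).1) (div_nonneg (by positivity) ht.le)
    (by rw [← mul_div_assoc, div_lt_iff₀ ht]; nlinarith [abs_nonneg C])
    (fun z hz => (hball z hz).2)
  have hψz : ψ (t * I) = z := hinj (hψ _ htI).1 (hball z hz).1 (by rw [(hψ _ htI).2, hφz])
  rw [hψz, ← hφz, norm_sub_rev]
  exact (hball z hz).2.trans (div_le_one_of_le₀ (by linarith) ht.le)

namespace ExtendsInvTo

variable {H : Set ℂ} {φ ψ : ℂ → ℂ} {c d : ℝ}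

theorem differentiableAt (hψ : ExtendsInvTo H φ ψ c d) {z : ℂ} (hz : z ∉ realSeg c d) :
    DifferentiableAt ℂ ψ z :=
  hψ.1.differentiableAt ((isOpen_compl_realSeg c d).mem_nhds hz)

theorem not_eventually_eq_id (hψ : ExtendsInvTo H φ ψ c d) (hH : H ⊆ UpperHalf)
    (hne : H.Nonempty) {x : ℝ} (hx : (x : ℂ) ∉ realSeg c d) : ¬ ∀ᶠ y : ℝ in 𝓝 x, ψ y = y := by
  intro h
  have hid := (hψ.1.analyticOnNhd (isOpen_compl_realSeg c d))
    |>.eqOn_of_preconnected_of_eventually_eq_real analyticOnNhd_id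
      (isPreconnected_compl_realSeg c d) hx h
  obtain ⟨z, hz⟩ := hne
  have hzU : 0 < z.im := hH hz
  have hzseg : z ∉ realSeg c d := fun h => hzU.ne' (mem_realSeg_iff.1 h).1
  exact (hψ.2 z hzU).1.2 (by rwa [hid hzseg])

theorem im_le_im (hψ : ExtendsInvTo H φ ψ c d) {c' : ℝ} (hφ : IsHydroMapOn H φ c')
    (hbdd : Bornology.IsBounded H) {w : ℂ} (hw : 0 < w.im) : w.im ≤ (ψ w).im := by
  obtain ⟨C, R, hC⟩ := hφ.exists_norm_sub_mul_norm_le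
  refine UpperHalf.im_le_im_of_eventually_norm_sub_le (fun z hz => ?_) (fun z hz => (hψ.2 z hz).1.1)
    (eventually_norm_sub_le_one hbdd hφ.1.injOn hφ.2.1 hψ.2 hC) hw
  exact (hψ.differentiableAt fun h => (ne_of_gt hz) (mem_realSeg_iff.1 h).1).differentiableWithinAt

theorem exists_norm_sub_mul_norm_le (hψ : ExtendsInvTo H φ ψ c d) {c' : ℝ}
    (hφ : IsHydroMapOn H φ c') :
    ∃ C R : ℝ, ∀ w : ℂ, 0 < w.im → R ≤ ‖ψ w‖ → ‖w - ψ w‖ * ‖ψ w‖ ≤ C := by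
  obtain ⟨C, R, hC⟩ := hφ.exists_norm_sub_mul_norm_le
  exact ⟨C, R, fun w hw hR => by
    simpa only [(hψ.2 w hw).2, norm_sub_rev] using hC _ (hψ.2 w hw).1 hR⟩

theorem self_lt_re_of_lt (hψ : ExtendsInvTo H φ ψ c d) {c' : ℝ} (hφ : IsHydroMapOn H φ c')
    (hH : H ⊆ UpperHalf) (hbdd : Bornology.IsBounded H) (hne : H.Nonempty)
    (hreal : ∀ y < c, (ψ y).im = 0) {y : ℝ} (hy : y < c) : y < (ψ y).re := by
  obtain ⟨C, R, hbound⟩ := hψ.exists_norm_sub_mul_norm_le hφ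
  exact self_lt_re_of_le_im_Iio (fun y hy => hψ.differentiableAt (ofReal_notMem_realSeg_of_lt hy))
    hreal (fun w hw => hψ.im_le_im hφ hbdd hw) hbound
    (fun x hx => hψ.not_eventually_eq_id hH hne (ofReal_notMem_realSeg_of_lt hx)) hy

theorem re_lt_self_of_gt (hψ : ExtendsInvTo H φ ψ c d) {c' : ℝ} (hφ : IsHydroMapOn H φ c')
    (hH : H ⊆ UpperHalf) (hbdd : Bornology.IsBounded H) (hne : H.Nonempty)
    (hreal : ∀ y, d < y → (ψ y).im = 0) {y : ℝ} (hy : d < y) : (ψ y).re < y := by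
  obtain ⟨C, R, hbound⟩ := hψ.exists_norm_sub_mul_norm_le hφ
  exact re_lt_self_of_le_im_Ioi (fun y hy => hψ.differentiableAt (ofReal_notMem_realSeg_of_gt hy))
    hreal (fun w hw => hψ.im_le_im hφ hbdd hw) hbound
    (fun x hx => hψ.not_eventually_eq_id hH hne (ofReal_notMem_realSeg_of_gt hx)) hy

end ExtendsInvTo

theorem hull_interval_inequalities_general (H : Set ℂ) (hH : IsHull H) (hne : H.Nonempty)
    (φ ψ : ℂ → ℂ) (hcap aH bH cH dH : ℝ)
    (hφ : IsHydroMapOn H φ hcap)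
    (hψ : ExtendsInvTo H φ ψ cH dH)
    (hψinv : ∀ x : ℝ, (x < aH ∨ bH < x) → ψ (φ (x : ℂ)) = (x : ℂ))
    (hφmap : ∀ x : ℝ, x < aH → ∃ y : ℝ, y < cH ∧ φ (x : ℂ) = (y : ℂ))
    (hφmap' : ∀ x : ℝ, bH < x → ∃ y : ℝ, dH < y ∧ φ (x : ℂ) = (y : ℂ))
    (hφonto : ∀ y : ℝ, y < cH → ∃ x : ℝ, x < aH ∧ φ (x : ℂ) = (y : ℂ))
    (hφonto' : ∀ y : ℝ, dH < y → ∃ x : ℝ, bH < x ∧ φ (x : ℂ) = (y : ℂ)) :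
    (∀ y : ℝ, y < cH → (ψ (y : ℂ)).im = 0 ∧ y < (ψ (y : ℂ)).re) ∧
    (∀ y : ℝ, dH < y → (ψ (y : ℂ)).im = 0 ∧ (ψ (y : ℂ)).re < y) ∧
    (∀ x : ℝ, x < aH → (φ (x : ℂ)).re < x) ∧
    (∀ x : ℝ, bH < x → x < (φ (x : ℂ)).re) ∧
    Set.Icc aH bH ⊆ Set.Icc cH dH := by
  have hleft : ∀ y < cH, ∃ x < aH, ψ y = x := fun y hy => by
    obtain ⟨x, hx, h⟩ := hφonto y hy
    exact ⟨x, hx, by rw [← h, hψinv x (.inl hx)]⟩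
  have hright : ∀ y > dH, ∃ x > bH, ψ y = x := fun y hy => by
    obtain ⟨x, hx, h⟩ := hφonto' y hy
    exact ⟨x, hx, by rw [← h, hψinv x (.inr hx)]⟩
  have hlt : ∀ y < cH, y < (ψ y).re := fun y => hψ.self_lt_re_of_lt hφ hH.1 hH.2.1 hne
    fun y hy => by obtain ⟨x, -, h⟩ := hleft y hy; simp [h]
  have hgt : ∀ y > dH, (ψ y).re < y := fun y => hψ.re_lt_self_of_gt hφ hH.1 hH.2.1 hne
    fun y hy => by obtain ⟨x, -, h⟩ := hright y hy; simp [h]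
  refine ⟨fun y hy => ⟨?_, hlt y hy⟩, fun y hy => ⟨?_, hgt y hy⟩, fun x hx => ?_, fun x hx => ?_,
    Icc_subset_Icc (le_of_forall_lt fun y hy => ?_) (le_of_forall_gt fun y hy => ?_)⟩
  · obtain ⟨x, -, h⟩ := hleft y hy; simp [h]
  · obtain ⟨x, -, h⟩ := hright y hy; simp [h]
  · obtain ⟨y, hy, h⟩ := hφmap x hx
    have := hlt y hy
    rw [← h, hψinv x (.inl hx)] at this
    simpa [h] using this
  · obtain ⟨y, hy, h⟩ := hφmap' x hx
    have := hgt y hy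
    rw [← h, hψinv x (.inr hx)] at this
    simpa [h] using this
  · obtain ⟨x, hx, h⟩ := hleft y hy
    simpa [h] using (hlt y hy).trans (by simpa [h] using hx)
  · obtain ⟨x, hx, h⟩ := hright y hy
    exact hx.trans (by simpa [h] using hgt y hy)

/-- **Lemma 5.2**: for a nonempty hull `H` in `ℍ` w.r.t. `∞`, the extension of
`φ_H⁻¹` satisfies `φ_H⁻¹(x) > x` on `(−∞, c_H)` and `φ_H⁻¹(x) < x` on `(d_H, ∞)`;
equivalently `φ_H(x) < x` on `(−∞, a_H)` and `φ_H(x) > x` on `(b_H, ∞)`.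
Consequently `[a_H, b_H] ⊆ [c_H, d_H]`. -/
theorem hull_interval_inequalities (H : Set ℂ) (hH : IsHull H) (hne : H.Nonempty)
    (φ ψ : ℂ → ℂ) (hcap aH bH cH dH : ℝ)
    (hφ : IsHydroMapOn H φ hcap)
    (haH : IsGLB {x : ℝ | (x : ℂ) ∈ closure H} aH)
    (hbH : IsLUB {x : ℝ | (x : ℂ) ∈ closure H} bH)
    (hmin : IsMinExtInterval H φ cH dH)
    (hψ : ExtendsInvTo H φ ψ cH dH)
    (hψinv : ∀ x : ℝ, (x < aH ∨ bH < x) → ψ (φ (x : ℂ)) = (x : ℂ))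
    (hφmap : ∀ x : ℝ, x < aH → ∃ y : ℝ, y < cH ∧ φ (x : ℂ) = (y : ℂ))
    (hφmap' : ∀ x : ℝ, bH < x → ∃ y : ℝ, dH < y ∧ φ (x : ℂ) = (y : ℂ))
    (hφonto : ∀ y : ℝ, y < cH → ∃ x : ℝ, x < aH ∧ φ (x : ℂ) = (y : ℂ))
    (hφonto' : ∀ y : ℝ, dH < y → ∃ x : ℝ, bH < x ∧ φ (x : ℂ) = (y : ℂ)) :
    (∀ y : ℝ, y < cH → (ψ (y : ℂ)).im = 0 ∧ y < (ψ (y : ℂ)).re) ∧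
    (∀ y : ℝ, dH < y → (ψ (y : ℂ)).im = 0 ∧ (ψ (y : ℂ)).re < y) ∧
    (∀ x : ℝ, x < aH → (φ (x : ℂ)).re < x) ∧
    (∀ x : ℝ, bH < x → x < (φ (x : ℂ)).re) ∧
    Set.Icc aH bH ⊆ Set.Icc cH dH :=
  hull_interval_inequalities_general H hH hne φ ψ hcap aH bH cH dH hφ hψ hψinv hφmap hφmap' hφonto
    hφonto'

end
end
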